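/- In the barrier-KKT context, let (x^μ, λ̄, ν) be a μ-central point, and let x* ∈ 𝒞 be a solution of the variational inequality, i.e., ⟪F(x*), z − x*⟫ ≥ 0 for all z ∈ 𝒞. Suppose F is star-ξ-monotone on 𝒞 at x* with constants c > 0 and ξ > 1: ⟪F(x) − F(x*), x − x*⟫ ≥ c‖x − x*‖^ξ for all x ∈ 𝒞. Then ‖x^μ − x*‖ ≤ (m·μ/c)^{1/ξ}. -/

import Mathlib

open scoped RealInnerProductSpace
open Matrix

/-- The feasible set `𝒞 = {x | φ_i(x) ≤ 0 for all i, and C x = d}`. -/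
def FeasSet {n m p : ℕ} (φ : Fin m → EuclideanSpace ℝ (Fin n) → ℝ)
    (C : Matrix (Fin p) (Fin n) ℝ) (d : EuclideanSpace ℝ (Fin p)) :
    Set (EuclideanSpace ℝ (Fin n)) :=
  {x | (∀ i, φ i x ≤ 0) ∧ Matrix.toEuclideanLin C x = d}

/-- A `μ`-central point `(x^μ, λ̄, ν)`: positive multipliers, stationarity, perturbed
complementarity `λ̄ᵢ φᵢ(x^μ) = −μ`, and primal feasibility `C x^μ = d`. -/
def IsMuCentral {n m p : ℕ} (F : EuclideanSpace ℝ (Fin n) → EuclideanSpace ℝ (Fin n))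
    (φ : Fin m → EuclideanSpace ℝ (Fin n) → ℝ)
    (C : Matrix (Fin p) (Fin n) ℝ) (d : EuclideanSpace ℝ (Fin p)) (μ : ℝ)
    (xμ : EuclideanSpace ℝ (Fin n)) (lamb : Fin m → ℝ)
    (ν : EuclideanSpace ℝ (Fin p)) : Prop :=
  (∀ i, 0 < lamb i) ∧
  F xμ + (∑ i, lamb i • gradient (φ i) xμ) + Matrix.toEuclideanLin Cᵀ ν = 0 ∧
  (∀ i, lamb i * φ i xμ = -μ) ∧
  Matrix.toEuclideanLin C xμ = d

/-!
Pairing the stationarity condition with `x^μ − x*` kills the equality-constraint term, since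
both points satisfy `C x = d`. By the gradient inequality for the convex `φ_i`, each term
`λ̄_i ⟪∇φ_i(x^μ), x* − x^μ⟫` is at most `λ̄_i (φ_i(x*) − φ_i(x^μ)) ≤ μ`, so
`⟪F(x^μ), x^μ − x*⟫ ≤ m μ`. As `x^μ` is feasible, `⟪F(x*), x^μ − x*⟫ ≥ 0`, and
star-ξ-monotonicity turns this into `c ‖x^μ − x*‖^ξ ≤ m μ`.
-/

theorem ConvexOn.hasFDerivAt_apply_sub_le {E : Type*} [NormedAddCommGroup E] [NormedSpace ℝ E]
    {s : Set E} {f : E → ℝ} {f' : E →L[ℝ] ℝ} {x y : E} (hf : ConvexOn ℝ s f) (hx : x ∈ s)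
    (hy : y ∈ s) (hf' : HasFDerivAt f f' x) :
    f' (y - x) ≤ f y - f x := by
  have hconv : ConvexOn ℝ (Set.Icc (0 : ℝ) 1) (f ∘ AffineMap.lineMap x y) :=
    (hf.comp_affineMap _).subset (fun _ ht => hf.1.lineMap_mem hx hy ht) (convex_Icc 0 1)
  have hderiv : HasDerivAt (f ∘ AffineMap.lineMap x y) (f' (y - x)) (0 : ℝ) := by
    simpa using hf'.comp_hasDerivAt_of_eq (0 : ℝ) AffineMap.hasDerivAt_lineMap (by simp)
  simpa [slope] using hconv.le_slope_of_hasDerivAt (Set.left_mem_Icc.2 zero_le_one)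
    (Set.right_mem_Icc.2 zero_le_one) zero_lt_one hderiv

theorem ConvexOn.inner_gradient_le_sub {E : Type*} [NormedAddCommGroup E]
    [InnerProductSpace ℝ E] [CompleteSpace E] {s : Set E} {f : E → ℝ} {x y : E}
    (hf : ConvexOn ℝ s f) (hx : x ∈ s) (hy : y ∈ s) (hd : DifferentiableAt ℝ f x) :
    ⟪gradient f x, y - x⟫ ≤ f y - f x := by
  simpa using hf.hasFDerivAt_apply_sub_le hx hy hd.hasGradientAt.hasFDerivAt

theorem Matrix.inner_toEuclideanLin_transpose {ι κ : Type*} [Fintype ι] [DecidableEq ι]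
    [Fintype κ] [DecidableEq κ] (C : Matrix κ ι ℝ) (v : EuclideanSpace ℝ κ)
    (x : EuclideanSpace ℝ ι) :
    ⟪toEuclideanLin Cᵀ v, x⟫ = ⟪v, toEuclideanLin C x⟫ := by
  rw [← conjTranspose_eq_transpose_of_trivial, toEuclideanLin_conjTranspose_eq_adjoint,
    LinearMap.adjoint_inner_left]

namespace IsMuCentral

variable {n m p : ℕ} {F : EuclideanSpace ℝ (Fin n) → EuclideanSpace ℝ (Fin n)}
  {φ : Fin m → EuclideanSpace ℝ (Fin n) → ℝ} {C : Matrix (Fin p) (Fin n) ℝ}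
  {d : EuclideanSpace ℝ (Fin p)} {μ : ℝ} {xμ : EuclideanSpace ℝ (Fin n)} {lamb : Fin m → ℝ}
  {ν : EuclideanSpace ℝ (Fin p)}

theorem mem_feasSet (h : IsMuCentral F φ C d μ xμ lamb ν) (hμ : 0 ≤ μ) :
    xμ ∈ FeasSet φ C d :=
  ⟨fun i => nonpos_of_mul_nonpos_right (by linarith [h.2.2.1 i]) (h.1 i), h.2.2.2⟩

theorem inner_sub_le (h : IsMuCentral F φ C d μ xμ lamb ν)
    (hφconv : ∀ i, ConvexOn ℝ Set.univ (φ i)) (hφdiff : ∀ i, DifferentiableAt ℝ (φ i) xμ)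
    {z : EuclideanSpace ℝ (Fin n)} (hz : z ∈ FeasSet φ C d) :
    ⟪F xμ, xμ - z⟫ ≤ m * μ := by
  obtain ⟨hlamb, hstat, hcomp, hCx⟩ := h
  have hF : F xμ = -((∑ i, lamb i • gradient (φ i) xμ) + toEuclideanLin Cᵀ ν) :=
    eq_neg_of_add_eq_zero_left (by rwa [add_assoc] at hstat)
  have hterm : ∀ i, lamb i * ⟪gradient (φ i) xμ, z - xμ⟫ ≤ μ := fun i =>
    calc lamb i * ⟪gradient (φ i) xμ, z - xμ⟫
        ≤ lamb i * (φ i z - φ i xμ) := mul_le_mul_of_nonneg_left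
          ((hφconv i).inner_gradient_le_sub trivial trivial (hφdiff i)) (hlamb i).le
      _ ≤ μ := by nlinarith [hcomp i, hz.1 i, hlamb i]
  calc ⟪F xμ, xμ - z⟫ = ∑ i, lamb i * ⟪gradient (φ i) xμ, z - xμ⟫ := by
        rw [hF, ← inner_neg_neg, neg_neg, neg_sub, inner_add_left, sum_inner,
          inner_toEuclideanLin_transpose, map_sub, hCx, hz.2, sub_self, inner_zero_right,
          add_zero]
        simp_rw [real_inner_smul_left]
    _ ≤ ∑ _i : Fin m, μ := Finset.sum_le_sum fun i _ => hterm i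
    _ = m * μ := by simp

end IsMuCentral

/-- Lemma on `‖x^μ − x*‖` under star-ξ-monotonicity:
`‖x^μ − x*‖ ≤ (m μ / c)^(1/ξ)`. -/
theorem stmt_17 {n m p : ℕ}
    (φ : Fin m → EuclideanSpace ℝ (Fin n) → ℝ)
    (hφconv : ∀ i, ConvexOn ℝ Set.univ (φ i))
    (hφdiff : ∀ i, Differentiable ℝ (φ i))
    (C : Matrix (Fin p) (Fin n) ℝ) (d : EuclideanSpace ℝ (Fin p))
    (μ : ℝ) (hμ : 0 < μ)
    (F : EuclideanSpace ℝ (Fin n) → EuclideanSpace ℝ (Fin n))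
    (xμ : EuclideanSpace ℝ (Fin n)) (lamb : Fin m → ℝ) (ν : EuclideanSpace ℝ (Fin p))
    (hcentral : IsMuCentral F φ C d μ xμ lamb ν)
    (xstar : EuclideanSpace ℝ (Fin n)) (hxstar : xstar ∈ FeasSet φ C d)
    (hsol : ∀ z ∈ FeasSet φ C d, 0 ≤ ⟪F xstar, z - xstar⟫)
    (c ξ : ℝ) (hc : 0 < c) (hξ : 1 < ξ)
    (hstar : ∀ x ∈ FeasSet φ C d, c * ‖x - xstar‖ ^ ξ ≤ ⟪F x - F xstar, x - xstar⟫) :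
    ‖xμ - xstar‖ ≤ ((m : ℝ) * μ / c) ^ (1 / ξ) := by
  have hfeas := hcentral.mem_feasSet hμ.le
  have hbound : c * ‖xμ - xstar‖ ^ ξ ≤ m * μ :=
    calc c * ‖xμ - xstar‖ ^ ξ ≤ ⟪F xμ - F xstar, xμ - xstar⟫ := hstar xμ hfeas
      _ ≤ ⟪F xμ, xμ - xstar⟫ := by rw [inner_sub_left]; linarith [hsol xμ hfeas]
      _ ≤ m * μ := hcentral.inner_sub_le hφconv (fun i => hφdiff i xμ) hxstar
  rw [one_div, Real.le_rpow_inv_iff_of_pos (norm_nonneg _) (by positivity) (by linarith),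
    le_div_iff₀ hc]
  linarith
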